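/- arXiv:1203.1465 — 3 statements merged into one kernel-verified Lean document; each statement's English description precedes it below -/
import Mathlib

section
/- Let $G = \mathrm{Sp}(2r)$, $r \geq 1$, with simple roots $\alpha_1,\ldots,\alpha_r$ (Bourbaki numbering, $\alpha_r$ long). Let $\lambda$ be a dominant weight, set $q = \max\{i : \alpha_i \in \mathrm{Supp}(\lambda)\}$, and define $\lambda^{\mathrm{lb}}_G = \lambda - \sum_{i=q}^{r-1}\alpha_i - \tfrac{1}{2}\alpha_r = \lambda + \omega_{q-1} - \omega_q$ (with $\omega_0=0$). Then every dominant weight $\mu$ with $\mu \leq_{\mathbb{Q}} \lambda$ but $\mu \not\leq \lambda$ satisfies $\mu \leq \lambda^{\mathrm{lb}}_G$. -/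
open Finset

/-!  Weights of `Sp(2r)` (type `C_r`), written in coordinates with respect to
the simple roots `α_1, …, α_r` (0-indexed as `α_0, …, α_{r-1}` below, with
`α_{r-1}` the long root).  The weight lattice of the simply connected group
`Sp(2r)` consists of the vectors all of whose coroot pairings are integers. -/

/-- The Cartan matrix of type `C_r` (0-indexed): `cartanC r i j = ⟨α_i, α_j^∨⟩`;
in particular `⟨α_{r-1}, α_{r-2}^∨⟩ = -2`. -/
def cartanC (r : ℕ) (i j : Fin r) : ℤ :=
  if i = j then 2
  else if i.val + 1 = r ∧ j.val + 2 = r then -2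
  else if i.val + 1 = j.val ∨ j.val + 1 = i.val then -1
  else 0

/-- `⟨x, α_j^∨⟩` for `x` in simple-root coordinates. -/
def pairC (r : ℕ) (x : Fin r → ℚ) (j : Fin r) : ℚ := ∑ i, x i * (cartanC r i j : ℚ)

/-- `x` is dominant. -/
def IsDomC (r : ℕ) (x : Fin r → ℚ) : Prop := ∀ j, 0 ≤ pairC r x j

/-- `x` belongs to the weight lattice of `Sp(2r)`. -/
def IsWtC (r : ℕ) (x : Fin r → ℚ) : Prop := ∀ j, ∃ m : ℤ, pairC r x j = m

/-- `x ∈ ℕ[Δ]`: all simple-root coordinates of `x` are natural numbers. -/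
def NatCoords {r : ℕ} (x : Fin r → ℚ) : Prop := ∀ i, ∃ m : ℕ, x i = m

/-- The simple-root coordinates of `λ - λ^lb_G = α_q + ⋯ + α_{r-1} + ½α_r`
(1-indexed), for `q` the largest index with `α_q ∈ Supp(λ)`. -/
def lbVecC (r : ℕ) (q : Fin r) : Fin r → ℚ :=
  fun i => if i.val + 1 = r then 1/2 else if q ≤ i then 1 else 0

/-!
STATEMENT 9.  Let `G = Sp(2r)`, `r ≥ 1`, `lam` a dominant weight,
`q = max {i : α_i ∈ Supp(lam)}` and
`λ^lb_G = lam - ∑_{i=q}^{r-1} α_i - ½ α_r  (= lam + ω_{q-1} - ω_q)`.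
Then every dominant weight `μ` of `Sp(2r)` with `μ ≤_ℚ lam` but `¬ (μ ≤ lam)`
satisfies `μ ≤ λ^lb_G`.
-/

def Xt (r : ℕ) (x : Fin r → ℚ) (n : ℕ) : ℚ := if h : n < r then x ⟨n, h⟩ else 0

lemma sum_val_eq {r : ℕ} (f : Fin r → ℚ) (k : ℕ) :
    (∑ i : Fin r, if i.val = k then f i else 0) = if h : k < r then f ⟨k, h⟩ else 0 := by
  by_cases h : k < r
  · rw [dif_pos h]
    have h1 : ∀ i : Fin r, (if i.val = k then f i else 0) = (if i = ⟨k, h⟩ then f i else 0) := by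
      intro i; simp [Fin.ext_iff]
    rw [Finset.sum_congr rfl fun i _ => h1 i, Finset.sum_ite_eq']
    simp
  · rw [dif_neg h]
    refine Finset.sum_eq_zero fun i _ => if_neg ?_
    have := i.isLt; omega

lemma sum_ite_guard {r : ℕ} (c : Prop) [Decidable c] (g : Fin r → ℚ) :
    (∑ i : Fin r, if c then g i else 0) = if c then ∑ i : Fin r, g i else 0 := by
  split <;> simp

lemma pairC_formula (r : ℕ) (x : Fin r → ℚ) (j : ℕ) (hj : j < r) :
    pairC r x ⟨j, hj⟩ =
      (if 1 ≤ j then -(Xt r x (j - 1)) else 0) + 2 * Xt r x j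
        + (if j + 2 = r then (-2 : ℚ) else -1) * Xt r x (j + 1) := by
  have key : ∀ i : Fin r, x i * ((cartanC r i ⟨j, hj⟩ : ℤ) : ℚ) =
      (if 1 ≤ j then (if i.val = j - 1 then -x i else 0) else 0)
        + (if i.val = j then 2 * x i else 0)
        + (if i.val = j + 1 then (if j + 2 = r then (-2 : ℚ) else -1) * x i else 0) := by
    intro i
    have hi := i.isLt
    simp only [cartanC, Fin.ext_iff]
    split_ifs <;> push_cast <;> first | (exfalso; omega) | ring1
  simp only [pairC]
  rw [Finset.sum_congr rfl fun i _ => key i, Finset.sum_add_distrib,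
    Finset.sum_add_distrib, sum_ite_guard, sum_val_eq, sum_val_eq, sum_val_eq]
  simp only [Xt]
  split_ifs <;> first | (exfalso; omega) | ring1

lemma cartan_row_sum (r : ℕ) (hr : 2 ≤ r) (i : Fin r) :
    (∑ j : Fin r, ((cartanC r i j : ℤ) : ℚ)) = if i.val = 0 then 1 else 0 := by
  have key : ∀ jj : Fin r, ((cartanC r i jj : ℤ) : ℚ) =
      (if 1 ≤ i.val then
        (if jj.val = i.val - 1 then (if i.val + 1 = r then (-2 : ℚ) else -1) else 0) else 0)
        + (if jj.val = i.val then 2 else 0)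
        + (if jj.val = i.val + 1 then (-1 : ℚ) else 0) := by
    intro jj
    have h1 := i.isLt
    have h2 := jj.isLt
    simp only [cartanC, Fin.ext_iff]
    split_ifs <;> push_cast <;> first | (exfalso; omega) | ring1
  rw [Finset.sum_congr rfl fun jj _ => key jj, Finset.sum_add_distrib, Finset.sum_add_distrib,
    sum_ite_guard, sum_val_eq, sum_val_eq, sum_val_eq]
  have := i.isLt
  split_ifs <;> first | (exfalso; omega) | norm_num

theorem sp_little_brother_dominates
    (r : ℕ) (hr : 1 ≤ r)
    (lam : Fin r → ℚ) (hdom : IsDomC r lam) (hwt : IsWtC r lam)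
    (q : Fin r) (hq : pairC r lam q ≠ 0) (hqmax : ∀ i, q < i → pairC r lam i = 0)
    (μ : Fin r → ℚ) (hμdom : IsDomC r μ) (hμwt : IsWtC r μ)
    -- `μ ≤_ℚ lam`
    (hleQ : ∀ i, 0 ≤ lam i - μ i)
    -- `¬ (μ ≤ lam)` in the dominance order
    (hnot : ¬ NatCoords (fun i => lam i - μ i)) :
    -- `μ ≤ λ^lb_G` in the dominance order
    NatCoords (fun i => (lam i - lbVecC r q i) - μ i) := by
  classical
  set d : Fin r → ℚ := fun i => lam i - μ i with hd
  have hdi : ∀ i, d i = lam i - μ i := fun i => rfl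
  have hdnn : ∀ i, 0 ≤ d i := by intro i; rw [hdi i]; exact hleQ i
  have hlin : ∀ j : Fin r, pairC r d j = pairC r lam j - pairC r μ j := by
    intro j
    simp only [pairC, hd, ← Finset.sum_sub_distrib]
    exact Finset.sum_congr rfl fun i _ => by ring
  have hPint : ∀ j : Fin r, ∃ m : ℤ, pairC r d j = m := by
    intro j
    obtain ⟨a, ha⟩ := hwt j
    obtain ⟨b, hb⟩ := hμwt j
    exact ⟨a - b, by rw [hlin j, ha, hb]; push_cast; ring⟩
  have hPle : ∀ j : Fin r, q.val < j.val → pairC r d j ≤ 0 := by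
    intro j hj
    have h0 := hμdom j
    rw [hlin j, hqmax j (Fin.lt_def.mpr hj)]
    linarith
  have hXnn : ∀ k, 0 ≤ Xt r d k := by
    intro k; unfold Xt; split
    · exact hdnn _
    · exact le_refl 0
  have hXd : ∀ i : Fin r, Xt r d i.val = d i := by
    intro i; unfold Xt; rw [dif_pos i.isLt]
  have hXtop : ∀ k, r ≤ k → Xt r d k = 0 := by
    intro k hk; unfold Xt; rw [dif_neg]; omega
  have form : ∀ (j : ℕ) (hj : j < r), pairC r d ⟨j, hj⟩ =
      (if 1 ≤ j then -(Xt r d (j - 1)) else 0) + 2 * Xt r d j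
        + (if j + 2 = r then (-2 : ℚ) else -1) * Xt r d (j + 1) :=
    fun j hj => pairC_formula r d j hj
  -- integrality of the coordinates below the last one
  have hDint : ∀ k, k + 1 < r → ∃ m : ℤ, Xt r d k = m := by
    intro k
    induction k using Nat.strong_induction_on with
    | _ k IH =>
      intro hk
      rcases Nat.lt_or_ge k 1 with h0 | h1
      · have hk0 : k = 0 := by omega
        subst hk0
        have hr2 : 2 ≤ r := by omega
        have hsum : (∑ j : Fin r, pairC r d j) = Xt r d 0 := by
          calc (∑ j : Fin r, pairC r d j)
              = ∑ j : Fin r, ∑ i : Fin r, d i * ((cartanC r i j : ℤ) : ℚ) := by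
                simp only [pairC]
            _ = ∑ i : Fin r, ∑ j : Fin r, d i * ((cartanC r i j : ℤ) : ℚ) := Finset.sum_comm
            _ = ∑ i : Fin r, d i * (∑ j : Fin r, ((cartanC r i j : ℤ) : ℚ)) := by
                exact Finset.sum_congr rfl fun i _ => (Finset.mul_sum _ _ _).symm
            _ = ∑ i : Fin r, (if i.val = 0 then d i else 0) := by
                refine Finset.sum_congr rfl fun i _ => ?_
                rw [cartan_row_sum r hr2 i]
                split_ifs <;> ring1
            _ = if h : (0:ℕ) < r then d ⟨0, h⟩ else 0 := sum_val_eq _ _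
            _ = Xt r d 0 := by rw [Xt]
        choose f hf using hPint
        refine ⟨∑ j : Fin r, f j, ?_⟩
        rw [← hsum]
        push_cast
        exact Finset.sum_congr rfl fun j _ => hf j
      · obtain ⟨j, rfl⟩ : ∃ j, k = j + 1 := ⟨k - 1, by omega⟩
        have hjr : j < r := by omega
        have hform := form j hjr
        obtain ⟨p, hp⟩ := hPint ⟨j, hjr⟩
        have hcoef : ¬ (j + 2 = r) := by omega
        rw [if_neg hcoef, hp] at hform
        by_cases hj1 : 1 ≤ j
        · rw [if_pos hj1] at hform
          obtain ⟨a, hA⟩ := IH (j - 1) (by omega) (by omega)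
          obtain ⟨b, hB⟩ := IH j (by omega) (by omega)
          rw [hA, hB] at hform
          refine ⟨-a + 2 * b - p, ?_⟩
          push_cast
          linarith
        · rw [if_neg hj1] at hform
          obtain ⟨b, hB⟩ := IH j (by omega) (by omega)
          rw [hB] at hform
          refine ⟨2 * b - p, ?_⟩
          push_cast
          linarith
  -- 2 * (last coordinate) is an integer
  have h2last : ∃ m : ℤ, 2 * Xt r d (r - 1) = m := by
    rcases Nat.lt_or_ge r 2 with hrs | hrs
    · have hr1 : r = 1 := by omega
      subst hr1
      have hj : (0:ℕ) < 1 := by omega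
      have hform := form 0 hj
      obtain ⟨p, hp⟩ := hPint ⟨0, hj⟩
      rw [if_neg (by omega), if_neg (by omega), hp, hXtop (0 + 1) (by omega)] at hform
      refine ⟨p, ?_⟩
      show 2 * Xt 1 d 0 = (p : ℚ)
      linarith
    · have hj : r - 2 < r := by omega
      have hform := form (r - 2) hj
      obtain ⟨p, hp⟩ := hPint ⟨r - 2, hj⟩
      have hco : (r - 2) + 2 = r := by omega
      have e1 : (r - 2) + 1 = r - 1 := by omega
      rw [if_pos hco, e1, hp] at hform
      by_cases h1 : 1 ≤ r - 2
      · rw [if_pos h1] at hform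
        obtain ⟨a, hA⟩ := hDint (r - 2 - 1) (by omega)
        obtain ⟨b, hB⟩ := hDint (r - 2) (by omega)
        rw [hA, hB] at hform
        refine ⟨-a + 2 * b - p, ?_⟩
        push_cast
        linarith
      · rw [if_neg h1] at hform
        obtain ⟨b, hB⟩ := hDint (r - 2) (by omega)
        rw [hB] at hform
        refine ⟨2 * b - p, ?_⟩
        push_cast
        linarith
  have hnat : ∀ k, k + 1 < r → ∃ m : ℕ, Xt r d k = m := by
    intro k hk
    obtain ⟨m, hm⟩ := hDint k hk
    have h0 : (0:ℚ) ≤ (m : ℚ) := hm ▸ hXnn k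
    have h0' : 0 ≤ m := by exact_mod_cast h0
    exact ⟨m.toNat, by rw [hm]; norm_cast; omega⟩
  obtain ⟨m0, hm0⟩ := h2last
  have hm0nn : 0 ≤ m0 := by
    have h0 : (0:ℚ) ≤ 2 * Xt r d (r - 1) := by linarith [hXnn (r - 1)]
    rw [hm0] at h0; exact_mod_cast h0
  have hXlast : ∀ i : Fin r, i.val + 1 = r → Xt r d (r - 1) = d i := by
    intro i hi
    have e : r - 1 = i.val := by omega
    rw [e, hXd i]
  have hodd : m0 % 2 = 1 := by
    by_contra hctr
    apply hnot
    intro i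
    by_cases hi : i.val + 1 = r
    · obtain ⟨t, ht⟩ : ∃ t : ℤ, m0 = 2 * t := ⟨m0 / 2, by omega⟩
      have htnn : 0 ≤ t := by omega
      have hm0' : 2 * d i = (m0 : ℚ) := by rw [← hXlast i hi]; exact hm0
      have hc : (m0 : ℚ) = 2 * (t : ℚ) := by exact_mod_cast ht
      have hdi2 : d i = (t : ℚ) := by linarith
      refine ⟨t.toNat, ?_⟩
      show d i = _
      rw [hdi2]; norm_cast; omega
    · obtain ⟨m, hm⟩ := hnat i.val (by have := i.isLt; omega)
      exact ⟨m, by show d i = _; rw [← hXd i]; exact hm⟩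
  obtain ⟨n, hn⟩ : ∃ n : ℕ, m0 = 2 * (n : ℤ) + 1 := ⟨((m0 - 1) / 2).toNat, by omega⟩
  have hhalf : Xt r d (r - 1) = (n : ℚ) + 1 / 2 := by
    have hc : (m0 : ℚ) = 2 * (n : ℚ) + 1 := by exact_mod_cast hn
    linarith [hm0]
  -- base inequality
  have base : q.val + 1 < r → 2 * Xt r d (r - 1) ≤ Xt r d (r - 2) := by
    intro hqr
    have hj : r - 1 < r := by omega
    have hform := form (r - 1) hj
    rw [if_neg (by omega : ¬ (r - 1 + 2 = r)), if_pos (by omega : 1 ≤ r - 1),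
      hXtop (r - 1 + 1) (by omega), (by omega : r - 1 - 1 = r - 2)] at hform
    have hle : pairC r d ⟨r - 1, hj⟩ ≤ 0 := hPle _ (show q.val < r - 1 by omega)
    rw [hform] at hle
    linarith
  -- descending chain
  have chain : ∀ N k, r - k ≤ N → q.val ≤ k → k + 1 < r →
      1 ≤ Xt r d k ∧ Xt r d (k + 1) ≤ Xt r d k := by
    intro N
    induction N with
    | zero => intro k h1 h2 h3; omega
    | succ N IH =>
      intro k hk hqk hkr
      have hqr : q.val + 1 < r := by omega
      have hb := base hqr
      have hDr1 : (1:ℚ) / 2 ≤ Xt r d (r - 1) := by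
        rw [hhalf]
        have : (0:ℚ) ≤ (n : ℚ) := Nat.cast_nonneg n
        linarith
      by_cases hk2 : k + 2 = r
      · constructor
        · rw [(by omega : k = r - 2)]
          linarith
        · rw [(by omega : k + 1 = r - 1), (by omega : k = r - 2)]
          linarith [hXnn (r - 1)]
      · obtain ⟨ih1, ih2⟩ := IH (k + 1) (by omega) (by omega) (by omega)
        have hj : k + 1 < r := by omega
        have hform := form (k + 1) hj
        rw [if_pos (by omega : 1 ≤ k + 1), (by omega : k + 1 - 1 = k)] at hform
        have hle : pairC r d ⟨k + 1, hj⟩ ≤ 0 := hPle _ (show q.val < k + 1 by omega)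
        rw [hform] at hle
        by_cases hc : k + 1 + 2 = r
        · rw [if_pos hc] at hle
          rw [(by omega : k + 1 + 1 = r - 1)] at hle
          rw [(by omega : r - 2 = k + 1)] at hb
          constructor
          · linarith
          · linarith
        · rw [if_neg hc] at hle
          constructor
          · linarith
          · linarith
  -- conclusion
  intro i
  show ∃ m : ℕ, lam i - lbVecC r q i - μ i = (m : ℚ)
  simp only [lbVecC]
  split_ifs with h1 h2
  · refine ⟨n, ?_⟩
    have hdl : d i = (n : ℚ) + 1 / 2 := by rw [← hXlast i h1]; exact hhalf
    rw [hdi i] at hdl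
    linarith
  · have hiv : i.val + 1 < r := by have := i.isLt; omega
    have hqv : q.val ≤ i.val := Fin.le_def.mp h2
    obtain ⟨hge1, _⟩ := chain r i.val (by omega) hqv hiv
    obtain ⟨m, hm⟩ := hnat i.val hiv
    rw [hXd i] at hm hge1
    have hm1 : 1 ≤ m := by
      have : (1:ℚ) ≤ (m : ℚ) := by rw [← hm]; exact hge1
      exact_mod_cast this
    refine ⟨m - 1, ?_⟩
    rw [hdi i] at hm
    push_cast [Nat.cast_sub hm1]
    linarith
  · obtain ⟨m, hm⟩ := hnat i.val (by have := i.isLt; omega)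
    rw [hXd i, hdi i] at hm
    exact ⟨m, by linarith⟩
end

section
/- Let $G = \mathrm{Sp}(2r)$, $r \geq 1$, $\lambda$ a dominant weight, $q = \max\{i : \alpha_i \in \mathrm{Supp}(\lambda)\}$, and $\lambda^{\mathrm{lb}}_G = \lambda + \omega_{q-1} - \omega_q$. Then for every dominant weight $\mu \leq \lambda^{\mathrm{lb}}_G$ one has $\mu \leq^{\lambda} \lambda^{\mathrm{lb}}_G$, i.e. $\lambda^{\mathrm{lb}}_G - \mu \in \mathbb{N}[\Phi^{+}(\lambda)]$. -/
open Finset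

/-- The positive roots of type `C_r` in simple-root coordinates (0-indexed):
the intervals `α_a + ⋯ + α_b` and the roots
`α_a + ⋯ + α_{b-1} + 2α_b + ⋯ + 2α_{r-2} + α_{r-1}`. -/
def posRootsC (r : ℕ) : Set (Fin r → ℚ) :=
  {β | (∃ a b : Fin r, a ≤ b ∧ β = fun i => if a ≤ i ∧ i ≤ b then 1 else 0) ∨
       (∃ a b : Fin r, a ≤ b ∧ b.val + 1 < r ∧
         β = fun i => if i.val + 1 = r then 1 else if b ≤ i then 2
                      else if a ≤ i then 1 else 0)}

/-- `Φ⁺(lam)`: the positive roots whose support meets `Supp(lam)`. -/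
def PhiPlusLamC (r : ℕ) (lam : Fin r → ℚ) : Set (Fin r → ℚ) :=
  {β | β ∈ posRootsC r ∧ ∃ i, pairC r lam i ≠ 0 ∧ β i ≠ 0}

/-- `x ∈ ℕ[S]`. -/
def InNatSpan {r : ℕ} (S : Set (Fin r → ℚ)) (x : Fin r → ℚ) : Prop :=
  x ∈ AddSubmonoid.closure S

/-!
STATEMENT 10.  Let `G = Sp(2r)`, `r ≥ 1`, `lam` a dominant weight,
`q = max {i : α_i ∈ Supp(lam)}` and `λ^lb_G = lam + ω_{q-1} - ω_q`.  Then for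
every dominant weight `μ ≤ λ^lb_G` one has `μ ≤^lam λ^lb_G`, i.e.
`λ^lb_G - μ ∈ ℕ[Φ⁺(lam)]`.
-/

/-- extension by zero -/
def extq (r : ℕ) (x : Fin r → ℚ) : ℕ → ℚ := fun k => if h : k < r then x ⟨k, h⟩ else 0

lemma cartan_split (r : ℕ) (i : Fin r) (j : ℕ) (hj : j < r) :
    (cartanC r i ⟨j, hj⟩ : ℚ) =
      (if i = (⟨j, hj⟩ : Fin r) then 2 else 0) - (if (i : ℕ) + 1 = j then 1 else 0)
      - (if (i : ℕ) = j + 1 then 1 else 0) - (if (i : ℕ) + 1 = r ∧ j + 2 = r then 1 else 0) := by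
  unfold cartanC
  simp only [Fin.ext_iff, Fin.val_mk]
  split_ifs <;> first | (exfalso; omega) | norm_num

lemma sum_ind (r : ℕ) (x : Fin r → ℚ) (P : Fin r → Prop) [DecidablePred P] (k : ℕ)
    (hk : k < r) (hP : ∀ i, P i ↔ (i : ℕ) = k) :
    ∑ i, x i * (if P i then 1 else 0) = extq r x k := by
  have : ∀ i : Fin r, x i * (if P i then 1 else 0) = if i = ⟨k, hk⟩ then x i else 0 := by
    intro i
    by_cases h : P i
    · rw [if_pos h, if_pos (Fin.ext ((hP i).1 h)), mul_one]
    · rw [if_neg h, if_neg (by intro he; exact h ((hP i).2 (by rw [he]))), mul_zero]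
  rw [Finset.sum_congr rfl (fun i _ => this i), Finset.sum_ite_eq' Finset.univ]
  simp [extq, hk]

lemma sum_ind0 (r : ℕ) (x : Fin r → ℚ) (P : Fin r → Prop) [DecidablePred P]
    (hP : ∀ i, ¬ P i) :
    ∑ i, x i * (if P i then 1 else 0) = 0 := by
  have : ∀ i : Fin r, x i * (if P i then 1 else 0) = 0 := fun i => by
    rw [if_neg (hP i), mul_zero]
  rw [Finset.sum_congr rfl (fun i _ => this i), Finset.sum_const_zero]

lemma pair_formula (r : ℕ) (x : Fin r → ℚ) (j : ℕ) (hj : j < r) :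
    pairC r x ⟨j, hj⟩ = 2 * extq r x j - (if j = 0 then 0 else extq r x (j-1))
      - (if j + 2 = r then 2 else 1) * extq r x (j+1) := by
  unfold pairC
  rw [Finset.sum_congr rfl (fun i _ => by rw [cartan_split r i j hj])]
  have expand : ∀ i : Fin r,
      x i * ((if i = (⟨j, hj⟩ : Fin r) then 2 else 0) - (if (i : ℕ) + 1 = j then 1 else 0)
        - (if (i : ℕ) = j + 1 then 1 else 0) - (if (i : ℕ) + 1 = r ∧ j + 2 = r then 1 else 0)) =
      (2 * (x i * (if i = (⟨j, hj⟩ : Fin r) then 1 else 0))) - x i * (if (i : ℕ) + 1 = j then 1 else 0)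
        - x i * (if (i : ℕ) = j + 1 then 1 else 0) - x i * (if (i : ℕ) + 1 = r ∧ j + 2 = r then 1 else 0) := by
    intro i; split_ifs <;> ring
  rw [Finset.sum_congr rfl (fun i _ => expand i)]
  rw [Finset.sum_sub_distrib, Finset.sum_sub_distrib, Finset.sum_sub_distrib, ← Finset.mul_sum]
  have S1 : ∑ i : Fin r, x i * (if i = (⟨j, hj⟩ : Fin r) then 1 else 0) = extq r x j :=
    sum_ind r x _ j hj (fun i => by constructor <;> intro h <;> [exact congrArg Fin.val h; exact Fin.ext h])
  rw [S1]
  by_cases hj0 : j = 0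
  · have S2 : ∑ i : Fin r, x i * (if (i : ℕ) + 1 = j then 1 else 0) = 0 :=
      sum_ind0 r x _ (fun i => by omega)
    rw [S2, if_pos hj0]
    by_cases hjr : j + 2 = r
    · have S3 : ∑ i : Fin r, x i * (if (i : ℕ) = j + 1 then 1 else 0) = extq r x (j+1) :=
        sum_ind r x _ (j+1) (by omega) (fun i => Iff.rfl)
      have S4 : ∑ i : Fin r, x i * (if (i : ℕ) + 1 = r ∧ j + 2 = r then 1 else 0) = extq r x (j+1) :=
        sum_ind r x _ (j+1) (by omega) (fun i => by constructor <;> intro h <;> [omega; exact ⟨by omega, hjr⟩])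
      rw [S3, S4, if_pos hjr]; ring
    · have S4 : ∑ i : Fin r, x i * (if (i : ℕ) + 1 = r ∧ j + 2 = r then 1 else 0) = 0 :=
        sum_ind0 r x _ (fun i => by omega)
      rw [S4, if_neg hjr]
      by_cases hj1 : j + 1 < r
      · have S3 : ∑ i : Fin r, x i * (if (i : ℕ) = j + 1 then 1 else 0) = extq r x (j+1) :=
          sum_ind r x _ (j+1) hj1 (fun i => Iff.rfl)
        rw [S3]; ring
      · have S3 : ∑ i : Fin r, x i * (if (i : ℕ) = j + 1 then 1 else 0) = 0 :=
          sum_ind0 r x _ (fun i => by have := i.isLt; omega)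
        have : extq r x (j+1) = 0 := by unfold extq; rw [dif_neg (by omega)]
        rw [S3, this]; ring
  · have S2 : ∑ i : Fin r, x i * (if (i : ℕ) + 1 = j then 1 else 0) = extq r x (j-1) :=
      sum_ind r x _ (j-1) (by omega) (fun i => by omega)
    rw [S2, if_neg hj0]
    by_cases hjr : j + 2 = r
    · have S3 : ∑ i : Fin r, x i * (if (i : ℕ) = j + 1 then 1 else 0) = extq r x (j+1) :=
        sum_ind r x _ (j+1) (by omega) (fun i => Iff.rfl)
      have S4 : ∑ i : Fin r, x i * (if (i : ℕ) + 1 = r ∧ j + 2 = r then 1 else 0) = extq r x (j+1) :=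
        sum_ind r x _ (j+1) (by omega) (fun i => by constructor <;> intro h <;> [omega; exact ⟨by omega, hjr⟩])
      rw [S3, S4, if_pos hjr]; ring
    · have S4 : ∑ i : Fin r, x i * (if (i : ℕ) + 1 = r ∧ j + 2 = r then 1 else 0) = 0 :=
        sum_ind0 r x _ (fun i => by omega)
      rw [S4, if_neg hjr]
      by_cases hj1 : j + 1 < r
      · have S3 : ∑ i : Fin r, x i * (if (i : ℕ) = j + 1 then 1 else 0) = extq r x (j+1) :=
          sum_ind r x _ (j+1) hj1 (fun i => Iff.rfl)
        rw [S3]; ring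
      · have S3 : ∑ i : Fin r, x i * (if (i : ℕ) = j + 1 then 1 else 0) = 0 :=
          sum_ind0 r x _ (fun i => by have := i.isLt; omega)
        have : extq r x (j+1) = 0 := by unfold extq; rw [dif_neg (by omega)]
        rw [S3, this]; ring

lemma pairC_sub (r : ℕ) (x y : Fin r → ℚ) (j : Fin r) :
    pairC r (fun i => x i - y i) j = pairC r x j - pairC r y j := by
  unfold pairC
  rw [← Finset.sum_sub_distrib]
  exact Finset.sum_congr rfl (fun i _ => by ring)

lemma pair_nonpos (r : ℕ) (x : Fin r → ℚ) (j : ℕ) (hj : j < r)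
    (hnn : ∀ k, 0 ≤ extq r x k) (h0 : extq r x j = 0) :
    pairC r x ⟨j, hj⟩ ≤ 0 := by
  rw [pair_formula r x j hj, h0]
  have h1 := hnn (j-1)
  have h2 := hnn (j+1)
  split_ifs <;> linarith

def Fd (r : ℕ) (x : Fin r → ℚ) : ℕ → ℚ := fun j =>
  if j + 1 = r then 2 * extq r x j - (if j = 0 then 0 else extq r x (j-1))
  else if j < r then extq r x j - (if j = 0 then 0 else extq r x (j-1))
  else 0

lemma pair_F (r : ℕ) (x : Fin r → ℚ) (j : ℕ) (hj : j < r) :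
    pairC r x ⟨j, hj⟩ = Fd r x j - Fd r x (j+1) := by
  rw [pair_formula r x j hj]
  unfold Fd
  simp only [Nat.add_sub_cancel]
  by_cases hlt : j + 1 < r
  · split_ifs <;> first | (cases ‹False›) | (exfalso; omega) | ring
  · have e : extq r x (j+1) = 0 := by unfold extq; rw [dif_neg hlt]
    rw [e]
    split_ifs <;> first | (cases ‹False›) | (exfalso; omega) | ring

lemma pair_lb (r : ℕ) (q : Fin r) (j : ℕ) (hj : j < r) :
    pairC r (lbVecC r q) ⟨j, hj⟩
      = (if j = (q : ℕ) then 1 else 0) - (if j + 1 = (q : ℕ) then 1 else 0) := by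
  have hq := q.isLt
  have hv : ∀ k, extq r (lbVecC r q) k
      = if k + 1 = r then 1/2 else if (q : ℕ) ≤ k ∧ k < r then 1 else 0 := by
    intro k
    unfold extq lbVecC
    by_cases h : k < r
    · rw [dif_pos h]
      simp only [Fin.le_def, Fin.val_mk]
      split_ifs <;> first | rfl | omega
    · rw [dif_neg h, if_neg (by omega), if_neg (by omega)]
  rw [pair_formula, hv, hv, hv]
  split_ifs <;> first | (exfalso; omega) | norm_num | (exfalso; omega)

lemma extq_sub (r : ℕ) (x y : Fin r → ℚ) (k : ℕ) :
    extq r (fun i => x i - y i) k = extq r x k - extq r y k := by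
  unfold extq
  by_cases h : k < r
  · rw [dif_pos h, dif_pos h, dif_pos h]
  · rw [dif_neg h, dif_neg h, dif_neg h]; ring

lemma extq_interval (r a b : ℕ) (ha : a < r) (hb : b < r) (k : ℕ) :
    extq r (fun i : Fin r => if (⟨a, ha⟩ : Fin r) ≤ i ∧ i ≤ (⟨b, hb⟩ : Fin r) then 1 else 0) k
      = if a ≤ k ∧ k ≤ b then 1 else 0 := by
  unfold extq
  by_cases h : k < r
  · rw [dif_pos h]
    simp only [Fin.le_def, Fin.val_mk]
  · rw [dif_neg h, if_neg (by omega)]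

lemma extq_doubled (r a bb : ℕ) (ha : a < r) (hb : bb < r) (k : ℕ) :
    extq r (fun i : Fin r => if i.val + 1 = r then 1 else if (⟨bb, hb⟩ : Fin r) ≤ i then 2
        else if (⟨a, ha⟩ : Fin r) ≤ i then 1 else 0) k
      = if k + 1 = r then 1 else if bb ≤ k ∧ k < r then 2
        else if a ≤ k ∧ k < r then 1 else 0 := by
  unfold extq
  by_cases h : k < r
  · rw [dif_pos h]
    simp only [Fin.le_def, Fin.val_mk]
    split_ifs <;> first | rfl | omega
  · rw [dif_neg h, if_neg (by omega), if_neg (by omega), if_neg (by omega)]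

lemma step_finish (r : ℕ) (lam ν β : Fin r → ℚ) (m βN : Fin r → ℕ) (E : ℕ → ℚ) (n : ℕ)
    (hm : ∀ i, ν i = (m i : ℚ)) (hβ : ∀ i, β i = (βN i : ℚ))
    (hβle : ∀ i, βN i ≤ m i) (i0 : Fin r) (hdec : 1 ≤ βN i0)
    (hβΦ : β ∈ PhiPlusLamC r lam)
    (hch' : ∀ j (hj : j < r), pairC r (fun i => ν i - β i) ⟨j, hj⟩ ≤ E j)
    (hn : ∑ i, m i ≤ n + 1)
    (ih : ∀ (ν : Fin r → ℚ) (m : Fin r → ℕ), (∀ i, ν i = (m i : ℚ)) →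
      (∀ j (hj : j < r), pairC r ν ⟨j, hj⟩ ≤ E j) → ∑ i, m i ≤ n →
      InNatSpan (PhiPlusLamC r lam) ν) :
    InNatSpan (PhiPlusLamC r lam) ν := by
  have hm' : ∀ i, ν i - β i = ((m i - βN i : ℕ) : ℚ) := fun i => by
    rw [hm, hβ, Nat.cast_sub (hβle i)]
  have hsum : ∑ i, (m i - βN i) < ∑ i, m i := by
    apply Finset.sum_lt_sum (fun i _ => Nat.sub_le _ _)
    exact ⟨i0, Finset.mem_univ i0, by have := hβle i0; omega⟩
  have hle' : ∑ i, (m i - βN i) ≤ n := by omega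
  have key := ih (fun i => ν i - β i) (fun i => m i - βN i) hm' hch' (by simpa using hle')
  have hsplit : ν = β + fun i => ν i - β i := funext fun i => by
    show ν i = β i + (ν i - β i); ring
  rw [InNatSpan, hsplit]
  exact AddSubmonoid.add_mem _ (AddSubmonoid.subset_closure hβΦ) key


set_option maxHeartbeats 2000000 in
lemma core (r : ℕ) (lam : Fin r → ℚ) (qv : ℕ) (hqv : qv < r)
    (hq : pairC r lam ⟨qv, hqv⟩ ≠ 0)
    (E : ℕ → ℚ)
    (hE0 : ∀ j, j < r → 0 ≤ E j)
    (hES : ∀ j (hj : j < r), pairC r lam ⟨j, hj⟩ = 0 → E j ≤ (if j + 1 = qv then 1 else 0)) :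
    ∀ n (ν : Fin r → ℚ) (m : Fin r → ℕ), (∀ i, ν i = (m i : ℚ)) →
      (∀ j (hj : j < r), pairC r ν ⟨j, hj⟩ ≤ E j) →
      (∑ i, m i ≤ n) →
      InNatSpan (PhiPlusLamC r lam) ν := by
  intro n
  induction n with
  | zero =>
    intro ν m hm hch hn
    have hz : ∀ i, m i = 0 := by
      intro i
      have h1 : ∑ i, m i = 0 := Nat.le_zero.mp hn
      exact (Finset.sum_eq_zero_iff.mp h1) i (Finset.mem_univ i)
    have : ν = 0 := funext fun i => by rw [hm i, hz i]; norm_num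
    rw [InNatSpan, this]
    exact AddSubmonoid.zero_mem _
  | succ n ih =>
    intro ν m hm hch hn
    by_cases h0 : ∀ i, m i = 0
    · have : ν = 0 := funext fun i => by rw [hm i, h0 i]; norm_num
      rw [InNatSpan, this]
      exact AddSubmonoid.zero_mem _
    push_neg at h0
    obtain ⟨i1, hi1⟩ := h0
    set M : ℕ → ℕ := fun k => if h : k < r then m ⟨k, h⟩ else 0 with hM
    have hC : ∀ k, extq r ν k = (M k : ℚ) := by
      intro k
      simp only [hM, extq]
      by_cases h : k < r
      · rw [dif_pos h, dif_pos h, hm]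
      · rw [dif_neg h, dif_neg h]; norm_num
    -- b : rightmost support point
    have hPi1 : M (i1 : ℕ) ≠ 0 := by simp only [hM]; rw [dif_pos i1.isLt]; simpa using hi1
    set b := Nat.findGreatest (fun k => M k ≠ 0) r with hbdef
    have hPb : M b ≠ 0 := by
      have h := Nat.findGreatest_spec (P := fun k => M k ≠ 0) (le_of_lt i1.isLt) hPi1
      rw [hbdef]; exact h
    have hb_le : b ≤ r := Nat.findGreatest_le r
    have hb_lt : b < r := by
      rcases Nat.lt_or_ge b r with h | h
      · exact h
      · exfalso; apply hPb; have : b = r := le_antisymm hb_le h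
        rw [this]; simp only [hM]; rw [dif_neg (lt_irrefl r)]
    have hbmax : ∀ k, b < k → M k = 0 := by
      intro k hk
      by_cases h : k ≤ r
      · by_contra hne
        exact Nat.findGreatest_is_greatest (P := fun k => M k ≠ 0) (hbdef ▸ hk) h hne
      · simp only [hM]; rw [dif_neg (by omega)]
    -- a : start of the component of b
    have hQex : ∃ j, ∀ k, k < b + 1 → j ≤ k → M k ≠ 0 := by
      refine ⟨b, fun k h1 h2 => ?_⟩
      have : k = b := by omega
      rw [this]; exact hPb
    set a := Nat.find hQex with hadef
    have haQ : ∀ k, k < b + 1 → a ≤ k → M k ≠ 0 := Nat.find_spec hQex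
    have ha_le : a ≤ b := Nat.find_min' hQex (fun k h1 h2 => by
      have : k = b := by omega
      rw [this]; exact hPb)
    have hcomp : ∀ k, a ≤ k → k ≤ b → 1 ≤ M k := fun k h1 h2 =>
      Nat.one_le_iff_ne_zero.mpr (haQ k (by omega) h1)
    have hprev : a = 0 ∨ M (a - 1) = 0 := by
      by_cases h : a = 0
      · exact Or.inl h
      · right
        have hnQ : ¬ (∀ k, k < b + 1 → a - 1 ≤ k → M k ≠ 0) := Nat.find_min hQex (by omega)
        push_neg at hnQ
        obtain ⟨k, hk1, hk2, hk3⟩ := hnQ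
        have : k = a - 1 := by
          by_contra hne
          exact haQ k hk1 (by omega) hk3
        rw [← this]; exact hk3
    have hCnn : ∀ k, 0 ≤ extq r ν k := fun k => by rw [hC]; positivity
    -- the component [a,b] meets the support of lam
    have hS : ∃ s, a ≤ s ∧ s ≤ b ∧ ∃ hs : s < r, pairC r lam ⟨s, hs⟩ ≠ 0 := by
      by_contra hno
      push_neg at hno
      have hno' : ∀ s (hs : s < r), a ≤ s → s ≤ b → pairC r lam ⟨s, hs⟩ = 0 :=
        fun s hs h1 h2 => hno s h1 h2 hs
      have hq_not : ¬ (a ≤ qv ∧ qv ≤ b) := fun ⟨h1, h2⟩ => hq (hno' qv hqv h1 h2)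
      have hstep : ∀ j, a ≤ j → j ≤ b →
          Fd r ν j - (if j + 1 = qv then 1 else 0) ≤ Fd r ν (j + 1) := by
        intro j h1 h2
        have hp := hch j (by omega)
        rw [pair_F r ν j (by omega)] at hp
        have hE := hES j (by omega) (hno' j (by omega) h1 h2)
        have := le_trans hp hE
        linarith
      have hchain : ∀ j (h : a ≤ j), j ≤ b → Fd r ν a ≤ Fd r ν j := by
        refine Nat.le_induction (fun _ => le_refl _) ?_
        intro j hj ih2 hjb
        have h1 := hstep j hj (by omega)
        have hifz : (if j + 1 = qv then (1:ℚ) else 0) = 0 :=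
          if_neg (fun he => hq_not ⟨by omega, by omega⟩)
        have h2 := ih2 (by omega)
        rw [hifz] at h1
        linarith
      have hFa : 1 ≤ Fd r ν a := by
        have hMa : 1 ≤ M a := hcomp a le_rfl ha_le
        have hMa' : (1:ℚ) ≤ (M a : ℚ) := by exact_mod_cast hMa
        have hz : (if a = 0 then (0:ℚ) else extq r ν (a - 1)) = 0 := by
          rcases hprev with h | h
          · rw [if_pos h]
          · by_cases h' : a = 0
            · rw [if_pos h']
            · rw [if_neg h', hC, h]; norm_num
        unfold Fd
        by_cases h1 : a + 1 = r
        · rw [if_pos h1, hz, hC]; linarith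
        · rw [if_neg h1, if_pos (by omega : a < r), hz, hC]; linarith
      have hlast := hstep b ha_le le_rfl
      have hcb := hchain b ha_le le_rfl
      have hFb1 : Fd r ν (b + 1) ≤ -1 + (if b + 1 = r then 1 else 0) := by
        by_cases h1 : b + 1 = r
        · unfold Fd
          rw [if_neg (by omega : ¬ b + 1 + 1 = r), if_neg (by omega : ¬ b + 1 < r), if_pos h1]
          norm_num
        · have hMb : 1 ≤ M b := hcomp b ha_le le_rfl
          have hMb' : (1:ℚ) ≤ (M b : ℚ) := by exact_mod_cast hMb
          have hMb1 : extq r ν (b + 1) = 0 := by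
            rw [hC, hbmax (b+1) (by omega)]; norm_num
          unfold Fd
          rw [if_neg h1]
          by_cases h2 : b + 1 + 1 = r
          · rw [if_pos h2, if_neg (by omega : ¬ b + 1 = 0), Nat.add_sub_cancel, hMb1, hC]
            linarith
          · rw [if_neg h2, if_pos (by omega : b + 1 < r), if_neg (by omega : ¬ b + 1 = 0),
              Nat.add_sub_cancel, hMb1, hC]
            linarith
      by_cases hbq : b + 1 = qv
      · rw [if_pos hbq] at hlast
        rw [if_neg (by omega : ¬ b + 1 = r)] at hFb1
        linarith
      · rw [if_neg hbq] at hlast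
        by_cases h1 : b + 1 = r
        · rw [if_pos h1] at hFb1; linarith
        · rw [if_neg h1] at hFb1; linarith
    obtain ⟨s, hsa, hsb, hsr, hsS⟩ := hS
    have hMm : ∀ i : Fin r, M (i : ℕ) = m i := fun i => by
      simp only [hM]; rw [dif_pos i.isLt]
    by_cases hdbl : b + 1 = r ∧ a + 2 < r ∧ ¬ (pairC r ν ⟨b-1, by omega⟩ + 1 ≤ E (b-1))
    · -- doubled root case
      obtain ⟨hbr, har, hnsl⟩ := hdbl
      have hb2 : 1 ≤ M (b-2) := hcomp _ (by omega) (by omega)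
      have hbb : 1 ≤ M b := hcomp _ ha_le le_rfl
      have hpairb : pairC r ν ⟨b-1, by omega⟩
          = ((2 * (M (b-1) : ℤ) - (M (b-2) : ℤ) - 2 * (M b : ℤ) : ℤ) : ℚ) := by
        rw [pair_formula r ν (b-1) (by omega)]
        simp only [hC]
        rw [if_neg (show ¬ b - 1 = 0 by omega), if_pos (show b - 1 + 2 = r by omega)]
        have e1 : b - 1 - 1 = b - 2 := by omega
        have e2 : b - 1 + 1 = b := by omega
        rw [e1, e2]
        push_cast; ring
      have hge : 0 ≤ 2 * (M (b-1) : ℤ) - (M (b-2) : ℤ) - 2 * (M b : ℤ) := by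
        by_contra hcon
        push_neg at hcon
        apply hnsl
        have hEz := hE0 (b-1) (by omega)
        have hle1 : pairC r ν ⟨b-1, by omega⟩ ≤ -1 := by
          rw [hpairb]
          have h2 : (2 * (M (b-1) : ℤ) - (M (b-2) : ℤ) - 2 * (M b : ℤ)) ≤ -1 := by omega
          exact_mod_cast h2
        linarith
      have hM2 : 2 ≤ M (b-1) := by omega
      have hQ2ex : ∃ j, a ≤ j ∧ ∀ k, k < r - 1 → j ≤ k → 2 ≤ M k := by
        refine ⟨b-1, by omega, fun k h1 h2 => ?_⟩
        have hk : k = b - 1 := by omega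
        rw [hk]; exact hM2
      set c := Nat.find hQ2ex with hcdef
      have hcspec := Nat.find_spec hQ2ex
      have hac : a ≤ c := hcspec.1
      have h2run : ∀ k, k < r - 1 → c ≤ k → 2 ≤ M k := hcspec.2
      have hc_le : c ≤ b - 1 := Nat.find_min' hQ2ex ⟨by omega, fun k h1 h2 => by
        have hk : k = b - 1 := by omega
        rw [hk]; exact hM2⟩
      have hcprev : c = a ∨ M (c - 1) = 1 := by
        by_cases h : c = a
        · exact Or.inl h
        · right
          have hnQ := Nat.find_min hQ2ex (show c - 1 < c by omega)
          have h1' : 1 ≤ M (c-1) := hcomp _ (by omega) (by omega)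
          push_neg at hnQ
          obtain ⟨k, hk1, hk2, hk3⟩ := hnQ (by omega)
          have hk : k = c - 1 := by
            by_contra hne
            have := h2run k hk1 (by omega)
            omega
          subst hk
          omega
      have haF : a < r := by omega
      have hcF : c < r := by omega
      set aF : Fin r := ⟨a, haF⟩ with haFdef
      set cF : Fin r := ⟨c, hcF⟩ with hcFdef
      set β : Fin r → ℚ := fun i => if i.val + 1 = r then 1 else if cF ≤ i then 2
        else if aF ≤ i then 1 else 0 with hβdef
      set βN : Fin r → ℕ := fun i => if i.val + 1 = r then 1 else if cF ≤ i then 2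
        else if aF ≤ i then 1 else 0 with hβNdef
      have hev : ∀ k, extq r β k = if k + 1 = r then 1 else if c ≤ k ∧ k < r then 2
          else if a ≤ k ∧ k < r then 1 else 0 := by
        intro k
        simp only [hβdef, haFdef, hcFdef]
        exact extq_doubled r a c haF hcF k
      have hβcast : ∀ i, β i = (βN i : ℚ) := by
        intro i; simp only [hβdef, hβNdef]; split_ifs <;> norm_num
      have hβle : ∀ i, βN i ≤ m i := by
        intro i
        simp only [hβNdef]
        have hiM := hMm i
        have hiLt := i.isLt
        split_ifs with h1 h2 h3
        · have := hcomp (i : ℕ) (by omega) (by omega)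
          omega
        · have h2' : c ≤ (i : ℕ) := h2
          have := h2run (i : ℕ) (by omega) h2'
          omega
        · have h3' : a ≤ (i : ℕ) := h3
          have := hcomp (i : ℕ) h3' (by omega)
          omega
        · exact Nat.zero_le _
      have hdec : 1 ≤ βN (⟨b, hb_lt⟩ : Fin r) := by
        simp only [hβNdef]
        rw [if_pos (show (⟨b, hb_lt⟩ : Fin r).val + 1 = r from hbr)]
      have hβΦ : β ∈ PhiPlusLamC r lam := by
        refine ⟨Or.inr ⟨aF, cF, (by exact hac : aF ≤ cF),
          (by exact (show c + 1 < r by omega) : (cF : ℕ) + 1 < r), rfl⟩,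
          ⟨s, hsr⟩, hsS, ?_⟩
        simp only [hβdef, haFdef, hcFdef, Fin.le_def, Fin.val_mk]
        split_ifs <;> first | (exfalso; omega) | norm_num
      have hnn' : ∀ k, 0 ≤ extq r (fun i => ν i - β i) k := by
        intro k
        rw [extq_sub, hev, hC]
        split_ifs with h1 h2 h3
        · have hk : k = b := by omega
          rw [hk]
          have h2 : (1:ℚ) ≤ (M b : ℚ) := by exact_mod_cast hbb
          linarith
        · have := h2run k (by omega) h2.1
          have h2' : (2:ℚ) ≤ (M k : ℚ) := by exact_mod_cast this
          linarith
        · have := hcomp k h3.1 (by omega)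
          have h3' : (1:ℚ) ≤ (M k : ℚ) := by exact_mod_cast this
          linarith
        · have h4 : (0:ℚ) ≤ (M k : ℚ) := by positivity
          linarith
      have hch' : ∀ j (hj : j < r), pairC r (fun i => ν i - β i) ⟨j, hj⟩ ≤ E j := by
        intro j hj
        by_cases hz1 : j + 1 = a
        · refine le_trans (pair_nonpos r _ j hj hnn' ?_) (hE0 j hj)
          rw [extq_sub, hev, hC]
          have hMa1 : M j = 0 := by
            rcases hprev with h | h
            · omega
            · rw [show j = a - 1 by omega]; exact h
          rw [hMa1, if_neg (by omega), if_neg (by omega), if_neg (by omega)]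
          norm_num
        by_cases hz2 : j + 1 = c ∧ a < c
        · refine le_trans (pair_nonpos r _ j hj hnn' ?_) (hE0 j hj)
          rw [extq_sub, hev, hC]
          have hM1 : M j = 1 := by
            rcases hcprev with h | h
            · omega
            · rw [show j = c - 1 by omega]; exact h
          rw [hM1, if_neg (by omega), if_neg (by omega),
            if_pos (show a ≤ j ∧ j < r by omega)]
          norm_num
        · have hβnn : 0 ≤ pairC r β ⟨j, hj⟩ := by
            rw [pair_formula r β j hj]
            simp only [hev]
            split_ifs <;> first | (exfalso; omega) | norm_num
          rw [pairC_sub]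
          have := hch j hj
          linarith
      exact step_finish r lam ν β m βN E n hm hβcast hβle ⟨b, hb_lt⟩ hdec hβΦ hch' hn ih
    · -- interval root [a, b]
      have hslack3 : (b + 1 = r ∧ a + 2 < r) → pairC r ν ⟨b-1, by omega⟩ + 1 ≤ E (b-1) := by
        intro h
        by_contra hcon
        exact hdbl ⟨h.1, h.2, hcon⟩
      have haF : a < r := by omega
      set aF : Fin r := ⟨a, haF⟩ with haFdef
      set bF : Fin r := ⟨b, hb_lt⟩ with hbFdef
      set β : Fin r → ℚ := fun i => if aF ≤ i ∧ i ≤ bF then 1 else 0 with hβdef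
      set βN : Fin r → ℕ := fun i => if aF ≤ i ∧ i ≤ bF then 1 else 0 with hβNdef
      have hev : ∀ k, extq r β k = if a ≤ k ∧ k ≤ b then 1 else 0 := by
        intro k
        simp only [hβdef, haFdef, hbFdef]
        exact extq_interval r a b haF hb_lt k
      have hβcast : ∀ i, β i = (βN i : ℚ) := by
        intro i; simp only [hβdef, hβNdef]; split_ifs <;> norm_num
      have hβle : ∀ i, βN i ≤ m i := by
        intro i
        simp only [hβNdef]
        split_ifs with h
        · have h1 : a ≤ (i : ℕ) := h.1
          have h2 : (i : ℕ) ≤ b := h.2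
          have := hcomp (i : ℕ) h1 h2
          rw [hMm i] at this
          omega
        · exact Nat.zero_le _
      have hdec : 1 ≤ βN bF := by
        simp only [hβNdef]
        rw [if_pos ⟨(by exact ha_le : a ≤ b), le_refl _⟩]
      have hβΦ : β ∈ PhiPlusLamC r lam := by
        refine ⟨Or.inl ⟨aF, bF, (by exact ha_le : a ≤ b), rfl⟩, ⟨s, hsr⟩, hsS, ?_⟩
        simp only [hβdef]
        rw [if_pos ⟨(by exact hsa : a ≤ s), (by exact hsb : s ≤ b)⟩]
        norm_num
      have hnn' : ∀ k, 0 ≤ extq r (fun i => ν i - β i) k := by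
        intro k
        rw [extq_sub, hev, hC]
        split_ifs with h
        · have := hcomp k h.1 h.2
          have h2 : (1:ℚ) ≤ (M k : ℚ) := by exact_mod_cast this
          linarith
        · have : (0:ℚ) ≤ (M k : ℚ) := by positivity
          linarith
      have hch' : ∀ j (hj : j < r), pairC r (fun i => ν i - β i) ⟨j, hj⟩ ≤ E j := by
        intro j hj
        by_cases hz1 : j + 1 = a
        · refine le_trans (pair_nonpos r _ j hj hnn' ?_) (hE0 j hj)
          rw [extq_sub, hev, hC]
          have hj_eq : j = a - 1 := by omega
          have hMa1 : M j = 0 := by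
            rcases hprev with h | h
            · omega
            · rw [hj_eq]; exact h
          rw [hMa1, if_neg (by omega)]
          norm_num
        by_cases hz2 : j = b + 1
        · refine le_trans (pair_nonpos r _ j hj hnn' ?_) (hE0 j hj)
          rw [extq_sub, hev, hC]
          have hMb1 : M j = 0 := by rw [hz2]; exact hbmax (b+1) (by omega)
          rw [hMb1, if_neg (by omega)]
          norm_num
        by_cases h3 : b + 1 = r ∧ a + 2 < r ∧ j + 2 = r
        · have hs3 := hslack3 ⟨h3.1, h3.2.1⟩
          have hβval : pairC r β ⟨j, hj⟩ = -1 := by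
            rw [pair_formula r β j hj]
            simp only [hev]
            rw [if_neg (show ¬ j = 0 by omega), if_pos h3.2.2,
              if_pos (show a ≤ j ∧ j ≤ b by omega), if_pos (show a ≤ j - 1 ∧ j - 1 ≤ b by omega),
              if_pos (show a ≤ j + 1 ∧ j + 1 ≤ b by omega)]
            norm_num
          have hfe : (⟨b - 1, by omega⟩ : Fin r) = ⟨j, hj⟩ := Fin.ext (by simp; omega)
          rw [hfe] at hs3
          have hbj : b - 1 = j := by omega
          rw [hbj] at hs3
          rw [pairC_sub, hβval]
          linarith
        · have hβnn : 0 ≤ pairC r β ⟨j, hj⟩ := by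
            rw [pair_formula r β j hj]
            simp only [hev]
            split_ifs <;> first | (exfalso; omega) | norm_num
          rw [pairC_sub]
          have := hch j hj
          linarith
      exact step_finish r lam ν β m βN E n hm hβcast hβle bF hdec hβΦ hch' hn ih

theorem sp_little_brother_lam_dominance
    (r : ℕ) (hr : 1 ≤ r)
    (lam : Fin r → ℚ) (hdom : IsDomC r lam) (hwt : IsWtC r lam)
    (q : Fin r) (hq : pairC r lam q ≠ 0) (hqmax : ∀ i, q < i → pairC r lam i = 0)
    (μ : Fin r → ℚ) (hμdom : IsDomC r μ) (hμwt : IsWtC r μ)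
    -- `μ ≤ λ^lb_G` in the dominance order
    (hle : NatCoords (fun i => (lam i - lbVecC r q i) - μ i)) :
    InNatSpan (PhiPlusLamC r lam) (fun i => (lam i - lbVecC r q i) - μ i) := by
  set E : ℕ → ℚ := fun j => if h : j < r then
      pairC r lam ⟨j, h⟩ - (if j = (q : ℕ) then 1 else 0) + (if j + 1 = (q : ℕ) then 1 else 0)
    else 0 with hEdef
  have hqe : (⟨(q : ℕ), q.isLt⟩ : Fin r) = q := Fin.eta q q.isLt
  have hq1 : (1 : ℚ) ≤ pairC r lam q := by
    obtain ⟨z, hz⟩ := hwt q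
    have h0 := hdom q
    rw [hz] at h0 hq ⊢
    have hz0 : z ≠ 0 := by exact_mod_cast hq
    have : (0:ℚ) ≤ (z:ℚ) := h0
    have hz1 : 1 ≤ z := by
      have : 0 ≤ z := by exact_mod_cast this
      omega
    exact_mod_cast hz1
  have hE0 : ∀ j, j < r → 0 ≤ E j := by
    intro j hj
    simp only [hEdef]
    rw [dif_pos hj]
    by_cases hjq : j = (q : ℕ)
    · have : (⟨j, hj⟩ : Fin r) = q := Fin.ext (by simpa using hjq)
      rw [this, if_pos hjq]
      split_ifs <;> linarith
    · have := hdom ⟨j, hj⟩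
      rw [if_neg hjq]
      split_ifs <;> linarith
  have hES : ∀ j (hj : j < r), pairC r lam ⟨j, hj⟩ = 0 →
      E j ≤ (if j + 1 = (q : ℕ) then 1 else 0) := by
    intro j hj h0
    simp only [hEdef]
    rw [dif_pos hj, h0]
    have hjq : j ≠ (q : ℕ) := by
      intro he
      apply hq
      have : (⟨j, hj⟩ : Fin r) = q := Fin.ext (by simpa using he)
      rw [← this]; exact h0
    rw [if_neg hjq]
    split_ifs <;> linarith
  have hsplit : ∀ j : Fin r, pairC r (fun i => (lam i - lbVecC r q i) - μ i) j
      = pairC r lam j - pairC r (lbVecC r q) j - pairC r μ j := by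
    intro j
    unfold pairC
    rw [← Finset.sum_sub_distrib, ← Finset.sum_sub_distrib]
    exact Finset.sum_congr rfl fun i _ => by ring
  have hch : ∀ j (hj : j < r),
      pairC r (fun i => (lam i - lbVecC r q i) - μ i) ⟨j, hj⟩ ≤ E j := by
    intro j hj
    rw [hsplit, pair_lb r q j hj]
    have hμ := hμdom ⟨j, hj⟩
    simp only [hEdef]
    rw [dif_pos hj]
    linarith
  choose m hm using hle
  exact core r lam (q : ℕ) q.isLt (hqe ▸ hq) E hE0 hES (∑ i, m i)
    (fun i => (lam i - lbVecC r q i) - μ i) m hm hch le_rfl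
end

section
/- In the root system of type $\mathsf{C}_r$ ($r \geq 2$) with Bourbaki numbering, let $\mu$ be a dominant weight and let $\lambda$ be a dominant weight with $\mathrm{Supp}(\lambda) \subset \{\alpha_1,\ldots,\alpha_q\}$, i.e. $\langle\lambda,\alpha_i^{\vee}\rangle = 0$ for $i > q$, and write $\lambda - \mu = \sum_{i=1}^r a_i \alpha_i$ as a nonnegative rational combination. Then $a_q \geq a_{q+1} \geq \cdots \geq a_{r-1} \geq 2a_r$. -/
open Finset

/-!
STATEMENT 15.  In type `C_r` (`r ≥ 2`), let `μ` be dominant and let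
`lam - μ = ∑ a_i α_i` be a nonnegative rational combination of the simple
roots, where `lam` is dominant with `Supp(lam) ⊆ {α_1, …, α_q}`.  Then
`a_q ≥ a_{q+1} ≥ ⋯ ≥ a_{r-1} ≥ 2·a_r`  (1-indexed; below `b` extends the
0-indexed coefficient function `a` by `0`).
-/

theorem coefficients_decrease_C
    (r : ℕ) (hr : 2 ≤ r)
    (lam μ : Fin r → ℚ) (hlamdom : IsDomC r lam) (hμdom : IsDomC r μ)
    (q : Fin r)
    -- `Supp(lam) ⊆ {α_1, …, α_q}`
    (hsupp : ∀ i, q < i → pairC r lam i = 0)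
    (a : Fin r → ℚ) (ha : ∀ i, lam i - μ i = a i) (hpos : ∀ i, 0 ≤ a i)
    (b : ℕ → ℚ) (hb : ∀ i : ℕ, b i = if h : i < r then a ⟨i, h⟩ else 0) :
    (∀ i : ℕ, q.val ≤ i → i + 2 < r → b (i + 1) ≤ b i) ∧
    (q.val + 2 ≤ r → 2 * b (r - 1) ≤ b (r - 2)) := by
  
  have hb0 : ∀ i, r ≤ i → b i = 0 := by
    intro i hi; rw [hb]; simp [Nat.not_lt.mpr hi]
  have hba : ∀ i : Fin r, a i = b i.val := by
    intro i; rw [hb]; simp [i.isLt]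
  -- expansion of pairings
  have hexp : ∀ j : Fin r, pairC r a j =
      2 * b j.val - (if j.val = 0 then 0 else b (j.val - 1))
        - (if j.val + 2 = r then 2 else 1) * b (j.val + 1) := by
    intro j
    set g : ℕ → ℚ := fun i => b i * (if i = j.val then (2:ℚ)
      else if i + 1 = r ∧ j.val + 2 = r then -2
      else if i + 1 = j.val ∨ j.val + 1 = i then -1 else 0) with hg
    have h1 : pairC r a j = ∑ i ∈ Finset.range r, g i := by
      rw [pairC, ← Fin.sum_univ_eq_sum_range g r]
      refine Finset.sum_congr rfl fun i _ => ?_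
      rw [hba i, hg]
      simp only [cartanC, Fin.ext_iff]
      split_ifs <;> norm_num
    have hgz : ∀ i, r ≤ i → g i = 0 := by
      intro i hi; rw [hg]; simp [hb0 i hi]
    have h2 : ∑ i ∈ Finset.range r, g i = ∑ i ∈ Finset.range (r + 2), g i := by
      refine Finset.sum_subset (Finset.range_subset_range.mpr (by omega)) ?_
      intro x _ hx
      exact hgz x (by simpa using hx)
    have hjr := j.isLt
    by_cases hj0 : j.val = 0
    · have hT : ∑ i ∈ ({0, 1} : Finset ℕ), g i = ∑ i ∈ Finset.range (r + 2), g i := by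
        refine Finset.sum_subset ?_ ?_
        · intro x hx
          simp only [Finset.mem_insert, Finset.mem_singleton] at hx
          simp only [Finset.mem_range]; omega
        · intro x _ hx
          simp only [Finset.mem_insert, Finset.mem_singleton, not_or] at hx
          rw [hg]
          have hx1 : ¬ (x = j.val) := by omega
          have hx2 : ¬ (x + 1 = r ∧ j.val + 2 = r) := by omega
          have hx3 : ¬ (x + 1 = j.val ∨ j.val + 1 = x) := by omega
          simp only [if_neg hx1, if_neg hx2, if_neg hx3, mul_zero]
      have A0 : g 0 = 2 * b 0 := by
        rw [hg]; beta_reduce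
        rw [if_pos hj0.symm]; ring
      have A1 : g 1 = b 1 * (if j.val + 2 = r then -2 else -1) := by
        rw [hg]; beta_reduce
        rw [if_neg (by omega : ¬ ((1:ℕ) = j.val))]
        by_cases hc : j.val + 2 = r
        · rw [if_pos ⟨by omega, hc⟩, if_pos hc]
        · rw [if_neg (by omega : ¬ (1 + 1 = r ∧ j.val + 2 = r)),
            if_pos (by omega : 1 + 1 = j.val ∨ j.val + 1 = 1), if_neg hc]
      rw [h1, h2, ← hT, Finset.sum_pair (by omega : (0:ℕ) ≠ 1), A0, A1, if_pos hj0]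
      by_cases hc : j.val + 2 = r
      · rw [if_pos hc, if_pos hc, hj0]; norm_num; try ring
      · rw [if_neg hc, if_neg hc, hj0]; norm_num; try ring
    · have hT : ∑ i ∈ ({j.val - 1, j.val, j.val + 1} : Finset ℕ), g i
          = ∑ i ∈ Finset.range (r + 2), g i := by
        refine Finset.sum_subset ?_ ?_
        · intro x hx
          simp only [Finset.mem_insert, Finset.mem_singleton] at hx
          simp only [Finset.mem_range]; omega
        · intro x _ hx
          simp only [Finset.mem_insert, Finset.mem_singleton, not_or] at hx
          rw [hg]
          have hx1 : ¬ (x = j.val) := by omega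
          have hx2 : ¬ (x + 1 = r ∧ j.val + 2 = r) := by omega
          have hx3 : ¬ (x + 1 = j.val ∨ j.val + 1 = x) := by omega
          simp only [if_neg hx1, if_neg hx2, if_neg hx3, mul_zero]
      have e1 : j.val - 1 + 1 = j.val := by omega
      have A0 : g (j.val - 1) = -b (j.val - 1) := by
        rw [hg]; beta_reduce
        rw [if_neg (by omega : ¬ (j.val - 1 = j.val)),
          if_neg (by omega : ¬ (j.val - 1 + 1 = r ∧ j.val + 2 = r)),
          if_pos (Or.inl e1)]
        ring
      have A1 : g j.val = 2 * b j.val := by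
        rw [hg]; beta_reduce
        rw [if_pos rfl]; ring
      have A2 : g (j.val + 1) = b (j.val + 1) * (if j.val + 2 = r then -2 else -1) := by
        rw [hg]; beta_reduce
        rw [if_neg (by omega : ¬ (j.val + 1 = j.val))]
        by_cases hc : j.val + 2 = r
        · rw [if_pos ⟨by omega, hc⟩, if_pos hc]
        · rw [if_neg (by omega : ¬ (j.val + 1 + 1 = r ∧ j.val + 2 = r)),
            if_pos (Or.inr rfl : j.val + 1 + 1 = j.val ∨ j.val + 1 = j.val + 1), if_neg hc]
      rw [h1, h2, ← hT]
      rw [Finset.sum_insert (by simp only [Finset.mem_insert, Finset.mem_singleton]; omega), Finset.sum_insert (by simp only [Finset.mem_singleton]; omega),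
        Finset.sum_singleton, A0, A1, A2, if_neg hj0]
      by_cases hc : j.val + 2 = r
      · rw [if_pos hc, if_pos hc]; ring
      · rw [if_neg hc, if_neg hc]; ring
  -- the key inequalities
  have hpairle : ∀ j : Fin r, q < j → pairC r a j ≤ 0 := by
    intro j hj
    have h1 : pairC r μ j = pairC r lam j - pairC r a j := by
      unfold pairC
      rw [← Finset.sum_sub_distrib]
      refine Finset.sum_congr rfl fun i _ => ?_
      rw [← ha i]; ring
    have h2 := hμdom j
    rw [h1, hsupp j hj] at h2
    linarith
  have key : ∀ j : ℕ, q.val < j → j < r →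
      2 * b j ≤ (if j = 0 then 0 else b (j - 1)) + (if j + 2 = r then 2 else 1) * b (j + 1) := by
    intro j hq hj
    have h1 := hpairle ⟨j, hj⟩ (by simpa [Fin.lt_def] using hq)
    rw [hexp ⟨j, hj⟩] at h1
    simp only at h1
    linarith
  have main : ∀ k i, i + 2 + k = r → q.val ≤ i →
      0 ≤ b i - (if i + 2 = r then 2 else 1) * b (i + 1) := by
    intro k
    induction k with
    | zero =>
      intro i hi hq
      have h := key (i + 1) (by omega) (by omega)
      rw [if_neg (by omega : ¬ (i + 1 = 0)), if_neg (by omega : ¬ (i + 1 + 2 = r))] at h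
      have hz : b (i + 1 + 1) = 0 := hb0 _ (by omega)
      rw [if_pos (by omega : i + 2 = r)]
      have e1 : i + 1 - 1 = i := by omega
      rw [e1, hz] at h
      have e2 : i + 1 + 1 = i + 2 := rfl
      linarith
    | succ k ih =>
      intro i hi hq
      have h := key (i + 1) (by omega) (by omega)
      have hD := ih (i + 1) (by omega) (by omega)
      rw [if_neg (by omega : ¬ (i + 1 = 0))] at h
      have e1 : i + 1 - 1 = i := by omega
      rw [e1] at h
      rw [if_neg (by omega : ¬ (i + 2 = r))]
      have e2 : i + 1 + 2 = (i + 1) + 2 := rfl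
      linarith
  constructor
  · intro i hqi hir
    have h := main (r - (i + 2)) i (by omega) hqi
    rw [if_neg (by omega : ¬ (i + 2 = r))] at h
    linarith
  · intro hq2
    have h := main 0 (r - 2) (by omega) (by omega)
    rw [if_pos (by omega : r - 2 + 2 = r)] at h
    have e1 : r - 2 + 1 = r - 1 := by omega
    rw [e1] at h
    linarith
end
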